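/- arXiv:1905.12517 — 2 statements merged into one kernel-verified Lean document; each statement's English description precedes it below -/
import Mathlib

section
/- Let n, M ≥ 1, σ > 0, μ ∈ ℝⁿ, ε ∈ ℝⁿ, and y = μ + ε (a deterministic identity; no randomness is needed). Let A_1, ..., A_M be arbitrary n×n real matrices and let θ̂ be any minimizer over the simplex Λ_M of θ ↦ C_p(A_θ) + (1/2) Σ_{j=1}^M θ_j ‖(A_θ − A_j)y‖². Then for every Ā ∈ {A_1, ..., A_M}: ‖A_{θ̂} y − μ‖² − ‖Ā y − μ‖² ≤ max_{j=1,...,M} ( 2εᵀ(A_j − Ā)y − 2σ² tr(A_j − Ā) − (1/2)‖(A_j − Ā)y‖² ). -/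
open MeasureTheory ProbabilityTheory Matrix BigOperators

noncomputable section

/-- Squared Euclidean norm of a vector in `ℝⁿ`. -/
def sqnorm {n : ℕ} (v : Fin n → ℝ) : ℝ := ∑ i, v i ^ 2

/-- Squared Frobenius norm of an `n × n` matrix. -/
def frobSq {n : ℕ} (A : Matrix (Fin n) (Fin n) ℝ) : ℝ := ∑ i, ∑ j, A i j ^ 2

/-- A family of ordered linear smoothers: symmetric matrices with quadratic form between
`0` and `‖w‖²`, pairwise commuting, and pairwise comparable in the Loewner order. -/
def IsOrderedSmootherFamily {n : ℕ} (F : Set (Matrix (Fin n) (Fin n) ℝ)) : Prop :=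
  (∀ A ∈ F, A.IsSymm ∧ ∀ w : Fin n → ℝ, 0 ≤ w ⬝ᵥ A.mulVec w ∧ w ⬝ᵥ A.mulVec w ≤ sqnorm w) ∧
  (∀ A ∈ F, ∀ B ∈ F, A * B = B * A) ∧
  (∀ A ∈ F, ∀ B ∈ F, (B - A).PosSemidef ∨ (A - B).PosSemidef)

/-- `ε ∼ N(0, σ² I_{n×n})`: the coordinates are independent `N(0, σ²)` random variables. -/
def IsGaussianVec {Ω : Type} [MeasureSpace Ω] {n : ℕ} (ε : Ω → Fin n → ℝ) (σ : ℝ) : Prop :=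
  (∀ i, Measurable fun ω => ε ω i) ∧
  iIndepFun (fun i ω => ε ω i) ℙ ∧
  ∀ i, Measure.map (fun ω => ε ω i) ℙ = gaussianReal 0 (Real.toNNReal (σ ^ 2))

/-- Membership in the simplex `Λ_M`. -/
def inSimplex {M : ℕ} (θ : Fin M → ℝ) : Prop := (∀ j, 0 ≤ θ j) ∧ ∑ j, θ j = 1

/-- `A_θ = ∑ θ_j A_j`. -/
def Aθ {n M : ℕ} (A : Fin M → Matrix (Fin n) (Fin n) ℝ) (θ : Fin M → ℝ) :
    Matrix (Fin n) (Fin n) ℝ := ∑ j, θ j • A j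

/-- The Q-aggregation objective: Mallows `C_p(A_θ)` plus the penalty
`(1/2) ∑_j θ_j ‖(A_θ − A_j) y‖²`. -/
def Qobj {n M : ℕ} (A : Fin M → Matrix (Fin n) (Fin n) ℝ) (σ : ℝ) (y : Fin n → ℝ)
    (θ : Fin M → ℝ) : ℝ :=
  (sqnorm ((Aθ A θ).mulVec y - y) + 2 * σ ^ 2 * (Aθ A θ).trace)
    + (1 / 2) * ∑ j, θ j * sqnorm ((Aθ A θ - A j).mulVec y)

lemma sqnorm_eq_dot {n : ℕ} (v : Fin n → ℝ) : sqnorm v = v ⬝ᵥ v := by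
  simp [sqnorm, dotProduct, sq]

lemma sqnorm_nonneg' {n : ℕ} (v : Fin n → ℝ) : 0 ≤ sqnorm v :=
  Finset.sum_nonneg fun i _ => sq_nonneg _

lemma dot_sum_smul {n M : ℕ} (w : Fin n → ℝ) (θ : Fin M → ℝ) (u : Fin M → Fin n → ℝ) :
    w ⬝ᵥ (∑ j, θ j • u j) = ∑ j, θ j * (w ⬝ᵥ u j) := by
  simp only [dotProduct, Finset.sum_apply, Pi.smul_apply, smul_eq_mul, Finset.mul_sum]
  rw [Finset.sum_comm]
  exact Finset.sum_congr rfl fun j _ => Finset.sum_congr rfl fun i _ => by ring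

lemma Aθ_mulVec {n M : ℕ} (A : Fin M → Matrix (Fin n) (Fin n) ℝ) (θ : Fin M → ℝ) (y : Fin n → ℝ) :
    (Aθ A θ).mulVec y = ∑ j, θ j • (A j).mulVec y := by
  ext i
  simp only [Aθ, Matrix.mulVec, dotProduct, Finset.sum_apply, Pi.smul_apply, smul_eq_mul,
    Matrix.sum_apply, Finset.sum_mul]
  rw [Finset.sum_comm]
  exact Finset.sum_congr rfl fun j _ => by
    simp only [Pi.smul_apply, Matrix.smul_apply, smul_eq_mul, Finset.mul_sum]
    exact Finset.sum_congr rfl fun i' _ => by ring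

lemma Aθ_trace {n M : ℕ} (A : Fin M → Matrix (Fin n) (Fin n) ℝ) (θ : Fin M → ℝ) :
    (Aθ A θ).trace = ∑ j, θ j * (A j).trace := by
  simp [Aθ, Matrix.trace_sum, Matrix.trace_smul, smul_eq_mul]

lemma sqnorm_sub_eq {n : ℕ} (a b : Fin n → ℝ) :
    sqnorm (a - b) = sqnorm a - 2 * (a ⬝ᵥ b) + sqnorm b := by
  simp only [sqnorm_eq_dot, sub_dotProduct, dotProduct_sub, dotProduct_comm b a]
  ring

lemma sqnorm_add_smul {n : ℕ} (a b : Fin n → ℝ) (t : ℝ) :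
    sqnorm (a + t • b) = sqnorm a + 2 * t * (a ⬝ᵥ b) + t ^ 2 * sqnorm b := by
  simp only [sqnorm_eq_dot, add_dotProduct, dotProduct_add, smul_dotProduct,
    dotProduct_smul, dotProduct_comm b a, smul_eq_mul]
  ring

lemma pen_eq {n M : ℕ} (θ : Fin M → ℝ) (hsum : ∑ j, θ j = 1) (u : Fin M → Fin n → ℝ) :
    ∑ j, θ j * sqnorm ((∑ l, θ l • u l) - u j)
      = (∑ j, θ j * sqnorm (u j)) - sqnorm (∑ l, θ l • u l) := by
  have h1 : ∀ j ∈ Finset.univ, θ j * sqnorm ((∑ l, θ l • u l) - u j)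
      = θ j * sqnorm (∑ l, θ l • u l) - 2 * (θ j * ((∑ l, θ l • u l) ⬝ᵥ u j))
        + θ j * sqnorm (u j) := fun j _ => by
    rw [sqnorm_sub_eq]; ring
  rw [Finset.sum_congr rfl h1, Finset.sum_add_distrib, Finset.sum_sub_distrib,
    ← Finset.sum_mul, hsum, ← Finset.mul_sum, ← dot_sum_smul, ← sqnorm_eq_dot]
  ring

lemma Qform {n M : ℕ} (A : Fin M → Matrix (Fin n) (Fin n) ℝ) (σ : ℝ) (y : Fin n → ℝ)
    (θ : Fin M → ℝ) (hsum : ∑ j, θ j = 1) :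
    Qobj A σ y θ = sqnorm ((∑ j, θ j • (A j).mulVec y) - y)
      + 2 * σ ^ 2 * (∑ j, θ j * (A j).trace)
      + (1/2) * ((∑ j, θ j * sqnorm ((A j).mulVec y)) - sqnorm (∑ j, θ j • (A j).mulVec y)) := by
  have hw := Aθ_mulVec A θ y
  have hpen : ∑ j, θ j * sqnorm ((Aθ A θ - A j).mulVec y)
      = ∑ j, θ j * sqnorm ((∑ l, θ l • (A l).mulVec y) - (A j).mulVec y) :=
    Finset.sum_congr rfl fun j _ => by rw [Matrix.sub_mulVec, hw]
  unfold Qobj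
  rw [Aθ_trace, hw, hpen, pen_eq θ hsum]


lemma seg_sum {M : ℕ} (θ : Fin M → ℝ) (k : Fin M) (t : ℝ) (c : Fin M → ℝ) :
    ∑ j, (θ j + t * ((if j = k then 1 else 0) - θ j)) * c j
      = (∑ j, θ j * c j) + t * (c k - ∑ j, θ j * c j) := by
  have h1 : ∀ j ∈ Finset.univ, (θ j + t * ((if j = k then (1:ℝ) else 0) - θ j)) * c j
      = θ j * c j + t * ((if j = k then c j else 0) - θ j * c j) := fun j _ => by
    by_cases h : j = k <;> simp [h] <;> ring
  rw [Finset.sum_congr rfl h1, Finset.sum_add_distrib, ← Finset.mul_sum,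
    Finset.sum_sub_distrib, Finset.sum_ite_eq' Finset.univ k c]
  simp

lemma seg_smul {n M : ℕ} (θ : Fin M → ℝ) (k : Fin M) (t : ℝ) (u : Fin M → Fin n → ℝ) :
    ∑ j, (θ j + t * ((if j = k then 1 else 0) - θ j)) • u j
      = (∑ j, θ j • u j) + t • (u k - ∑ j, θ j • u j) := by
  ext i
  have h := seg_sum θ k t (fun j => u j i)
  simpa [Finset.sum_apply, mul_sub] using h

lemma seg_one {M : ℕ} (θ : Fin M → ℝ) (hθ1 : ∑ j, θ j = 1) (k : Fin M) (t : ℝ) :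
    ∑ j, (θ j + t * ((if j = k then 1 else 0) - θ j)) = 1 := by
  have h := seg_sum θ k t (fun _ => (1:ℝ))
  simp only [mul_one] at h
  rw [h, hθ1]; ring

lemma Qseg {n M : ℕ} (A : Fin M → Matrix (Fin n) (Fin n) ℝ) (σ : ℝ) (y : Fin n → ℝ)
    (θ : Fin M → ℝ) (hθ1 : ∑ j, θ j = 1) (k : Fin M) (t : ℝ) :
    Qobj A σ y (fun j => θ j + t * ((if j = k then 1 else 0) - θ j))
      = Qobj A σ y θ
        + t * (2 * (((∑ j, θ j • (A j).mulVec y) - y) ⬝ᵥ ((A k).mulVec y - ∑ j, θ j • (A j).mulVec y))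
               + 2 * σ ^ 2 * ((A k).trace - ∑ j, θ j * (A j).trace)
               + (1/2) * (sqnorm ((A k).mulVec y) - ∑ j, θ j * sqnorm ((A j).mulVec y))
               - ((∑ j, θ j • (A j).mulVec y) ⬝ᵥ ((A k).mulVec y - ∑ j, θ j • (A j).mulVec y)))
        + t ^ 2 * ((1/2) * sqnorm ((A k).mulVec y - ∑ j, θ j • (A j).mulVec y)) := by
  rw [Qform A σ y _ (seg_one θ hθ1 k t), Qform A σ y θ hθ1]
  rw [seg_smul θ k t (fun j => (A j).mulVec y), seg_sum θ k t (fun j => (A j).trace),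
      seg_sum θ k t (fun j => sqnorm ((A j).mulVec y))]
  rw [show (∑ j, θ j • (A j).mulVec y) + t • ((A k).mulVec y - ∑ j, θ j • (A j).mulVec y) - y
        = ((∑ j, θ j • (A j).mulVec y) - y)
          + t • ((A k).mulVec y - ∑ j, θ j • (A j).mulVec y) from by abel]
  rw [sqnorm_add_smul, sqnorm_add_smul]
  ring

lemma b_nonneg {b c : ℝ} (hc : 0 ≤ c)
    (h : ∀ t : ℝ, 0 < t → t ≤ 1 → 0 ≤ t * b + t ^ 2 * c) : 0 ≤ b := by
  by_contra hb
  push_neg at hb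
  have h1 := h 1 one_pos le_rfl
  have hc0 : 0 < c := by nlinarith
  have ht : 0 < -b / (2 * c) := div_pos (by linarith) (by linarith)
  have ht1 : -b / (2 * c) ≤ 1 := by
    rw [div_le_one (by linarith)]; nlinarith
  have h2 := h _ ht ht1
  have e : (-b / (2 * c)) * b + (-b / (2 * c)) ^ 2 * c = (-b / (2 * c)) * (b / 2) := by
    field_simp; ring
  rw [e] at h2
  nlinarith [mul_pos ht (show (0:ℝ) < -(b/2) by linarith)]

lemma final_step {n M : ℕ} (μ ε : Fin n → ℝ) (σ2 : ℝ) (u : Fin M → Fin n → ℝ)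
    (tr : Fin M → ℝ) (θ : Fin M → ℝ) (hθ1 : ∑ j, θ j = 1) (k : Fin M)
    (hb : 0 ≤ 2 * (((∑ j, θ j • u j) - (μ + ε)) ⬝ᵥ (u k - ∑ j, θ j • u j))
          + 2 * σ2 * (tr k - ∑ j, θ j * tr j)
          + (1/2) * (sqnorm (u k) - ∑ j, θ j * sqnorm (u j))
          - ((∑ j, θ j • u j) ⬝ᵥ (u k - ∑ j, θ j • u j))) :
    sqnorm ((∑ j, θ j • u j) - μ) - sqnorm (u k - μ)
      ≤ ∑ j, θ j * (2 * (ε ⬝ᵥ (u j - u k)) - 2 * σ2 * (tr j - tr k)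
          - (1/2) * sqnorm (u j - u k)) := by
  have hexp : ∀ j ∈ Finset.univ, θ j * (2 * (ε ⬝ᵥ (u j - u k)) - 2 * σ2 * (tr j - tr k)
        - (1/2) * sqnorm (u j - u k))
      = 2 * (θ j * (ε ⬝ᵥ u j)) + 1 * (θ j * (u k ⬝ᵥ u j))
        + (-(2 * (ε ⬝ᵥ u k)) + 2 * σ2 * tr k - (1/2) * sqnorm (u k)) * θ j
        + (-(2 * σ2)) * (θ j * tr j) + (-(1/2)) * (θ j * sqnorm (u j)) := fun j _ => by
    rw [sqnorm_sub_eq, dotProduct_sub, dotProduct_comm (u j) (u k)]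
    ring
  rw [Finset.sum_congr rfl hexp]
  simp only [Finset.sum_add_distrib]
  simp only [← Finset.mul_sum]
  rw [← dot_sum_smul ε θ u, ← dot_sum_smul (u k) θ u, hθ1]
  rw [sqnorm_sub_eq, sqnorm_sub_eq]
  simp only [sub_dotProduct, add_dotProduct, dotProduct_sub] at hb
  linarith [hb, dotProduct_comm (∑ j, θ j • u j) (u k), dotProduct_comm μ (∑ j, θ j • u j),
    dotProduct_comm μ (u k), sqnorm_eq_dot (∑ j, θ j • u j), sqnorm_eq_dot (u k),
    dotProduct_comm ε (∑ j, θ j • u j), dotProduct_comm ε (u k)]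


/-- Deterministic inequality: the Q-aggregation estimator satisfies, for any `Ā` in the
family, `‖A_θ̂ y − μ‖² − ‖Ā y − μ‖² ≤ max_j (2εᵀ(A_j − Ā)y − 2σ² tr(A_j − Ā) − ½‖(A_j − Ā)y‖²)`. -/
theorem q_aggregation_deterministic_inequality
    (n M : ℕ) (hn : 1 ≤ n) (hM : 1 ≤ M) (σ : ℝ) (hσ : 0 < σ)
    (μ ε : Fin n → ℝ) (y : Fin n → ℝ) (hy : y = μ + ε)
    (A : Fin M → Matrix (Fin n) (Fin n) ℝ)
    (θhat : Fin M → ℝ) (hθhat : inSimplex θhat)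
    (hmin : ∀ θ : Fin M → ℝ, inSimplex θ → Qobj A σ y θhat ≤ Qobj A σ y θ)
    (Abar : Matrix (Fin n) (Fin n) ℝ) (hAbar : ∃ k : Fin M, Abar = A k) :
    sqnorm ((Aθ A θhat).mulVec y - μ) - sqnorm (Abar.mulVec y - μ)
      ≤ ⨆ j : Fin M,
          (2 * (ε ⬝ᵥ (A j - Abar).mulVec y) - 2 * σ ^ 2 * (A j - Abar).trace
            - (1 / 2) * sqnorm ((A j - Abar).mulVec y)) := by
  obtain ⟨k, hk⟩ := hAbar
  subst hk
  subst hy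
  obtain ⟨hθ0, hθ1⟩ := hθhat
  set y : Fin n → ℝ := μ + ε with hy
  -- the first-order optimality condition
  have key : ∀ t : ℝ, 0 < t → t ≤ 1 →
      0 ≤ t * (2 * (((∑ j, θhat j • (A j).mulVec y) - y) ⬝ᵥ ((A k).mulVec y - ∑ j, θhat j • (A j).mulVec y))
               + 2 * σ ^ 2 * ((A k).trace - ∑ j, θhat j * (A j).trace)
               + (1/2) * (sqnorm ((A k).mulVec y) - ∑ j, θhat j * sqnorm ((A j).mulVec y))
               - ((∑ j, θhat j • (A j).mulVec y) ⬝ᵥ ((A k).mulVec y - ∑ j, θhat j • (A j).mulVec y)))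
        + t ^ 2 * ((1/2) * sqnorm ((A k).mulVec y - ∑ j, θhat j • (A j).mulVec y)) := by
    intro t ht ht1
    have hins : inSimplex (fun j => θhat j + t * ((if j = k then 1 else 0) - θhat j)) := by
      refine ⟨fun j => ?_, seg_one θhat hθ1 k t⟩
      show 0 ≤ θhat j + t * ((if j = k then 1 else 0) - θhat j)
      by_cases h : j = k
      · rw [if_pos h]
        nlinarith [hθ0 j]
      · rw [if_neg h]
        nlinarith [hθ0 j]
    have h1 := hmin _ hins
    rw [Qseg A σ y θhat hθ1 k t] at h1
    linarith
  have hb := b_nonneg (mul_nonneg (by norm_num) (sqnorm_nonneg' _)) fun t ht ht1 => key t ht ht1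
  rw [Aθ_mulVec]
  have hstep := final_step μ ε (σ^2) (fun j => (A j).mulVec y) (fun j => (A j).trace)
      θhat hθ1 k hb
  refine hstep.trans ?_
  have hble : BddAbove (Set.range fun j : Fin M =>
      2 * (ε ⬝ᵥ (A j - A k).mulVec y) - 2 * σ ^ 2 * (A j - A k).trace
        - (1 / 2) * sqnorm ((A j - A k).mulVec y)) := (Set.finite_range _).bddAbove
  have hle : ∀ j : Fin M,
      2 * (ε ⬝ᵥ ((A j).mulVec y - (A k).mulVec y)) - 2 * σ ^ 2 * ((A j).trace - (A k).trace)
        - (1/2) * sqnorm ((A j).mulVec y - (A k).mulVec y)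
      ≤ ⨆ j : Fin M, (2 * (ε ⬝ᵥ (A j - A k).mulVec y) - 2 * σ ^ 2 * (A j - A k).trace
            - (1 / 2) * sqnorm ((A j - A k).mulVec y)) := by
    intro j
    have := le_ciSup hble j
    rwa [Matrix.sub_mulVec, Matrix.trace_sub] at this
  calc ∑ j, θhat j * (2 * (ε ⬝ᵥ ((A j).mulVec y - (A k).mulVec y))
          - 2 * σ^2 * ((A j).trace - (A k).trace)
          - (1/2) * sqnorm ((A j).mulVec y - (A k).mulVec y))
      ≤ ∑ j, θhat j * (⨆ j : Fin M, (2 * (ε ⬝ᵥ (A j - A k).mulVec y)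
          - 2 * σ ^ 2 * (A j - A k).trace - (1 / 2) * sqnorm ((A j - A k).mulVec y))) :=
        Finset.sum_le_sum fun j _ => mul_le_mul_of_nonneg_left (hle j) (hθ0 j)
    _ = _ := by rw [← Finset.sum_mul, hθ1, one_mul]
end
end

section
/- Let n, p ≥ 1, X ∈ ℝ^{n×p}, and let K ∈ ℝ^{p×p} be symmetric positive definite. For λ ≥ 0 with XᵀX + λK invertible, define A_λ = X(XᵀX + λK)^{−1}Xᵀ. Then: (i) A_λ = B(BᵀB + λI_{p×p})^{−1}Bᵀ where B = XK^{−1/2}; (ii) each A_λ is symmetric and satisfies 0 ≤ wᵀA_λ w ≤ ‖w‖² for all w ∈ ℝⁿ; (iii) A_λ A_ν = A_ν A_λ for all such λ, ν; and (iv) if λ ≤ ν then A_ν ⪯ A_λ in the Loewner order. In particular, for any grid λ_1, ..., λ_M ≥ 0, the family {A_{λ_1}, ..., A_{λ_M}} is a family of ordered linear smoothers. -/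
open Matrix BigOperators

noncomputable section

/-- The positive semidefinite square root of a positive semidefinite matrix
(the definition `Matrix.PosSemidef.sqrt` of the older Mathlib, since removed). -/
def posSemidefSqrt {m : Type*} [Fintype m] [DecidableEq m] {A : Matrix m m ℝ}
    (hA : A.PosSemidef) : Matrix m m ℝ :=
  hA.1.eigenvectorUnitary.1 * diagonal ((↑) ∘ (√·) ∘ hA.1.eigenvalues) *
  (star hA.1.eigenvectorUnitary : Matrix m m ℝ)

/-- The Tikhonov smoothing matrix `A_λ = X (XᵀX + λK)⁻¹ Xᵀ`. -/
def tikhonovSmoother {n p : ℕ} (X : Matrix (Fin n) (Fin p) ℝ)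
    (K : Matrix (Fin p) (Fin p) ℝ) (lam : ℝ) : Matrix (Fin n) (Fin n) ℝ :=
  X * (Xᵀ * X + lam • K)⁻¹ * Xᵀ

namespace TikAux

variable {n p : ℕ}

lemma comm_inv {P Q : Matrix (Fin p) (Fin p) ℝ} (h : IsUnit P.det)
    (hc : Q * P = P * Q) : P⁻¹ * Q = Q * P⁻¹ := by
  have h1 : P⁻¹ * (Q * P) * P⁻¹ = P⁻¹ * (P * Q) * P⁻¹ := by rw [hc]
  calc P⁻¹ * Q = P⁻¹ * Q * (P * P⁻¹) := by rw [Matrix.mul_nonsing_inv _ h, Matrix.mul_one]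
    _ = P⁻¹ * (Q * P) * P⁻¹ := by simp only [Matrix.mul_assoc]
    _ = P⁻¹ * (P * Q) * P⁻¹ := h1
    _ = (P⁻¹ * P) * (Q * P⁻¹) := by simp only [Matrix.mul_assoc]
    _ = Q * P⁻¹ := by rw [Matrix.nonsing_inv_mul _ h, Matrix.one_mul]

lemma psd_smul {P : Matrix (Fin p) (Fin p) ℝ} (hP : P.PosSemidef) {c : ℝ}
    (hc : 0 ≤ c) : (c • P).PosSemidef := by
  refine ⟨?_, fun x => ?_⟩
  · unfold Matrix.IsHermitian
    rw [conjTranspose_smul, hP.1]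
    simp
  · exact (hP.smul hc).2 x

/-- `N B lam = BᵀB + lam • 1`. -/
def N (B : Matrix (Fin n) (Fin p) ℝ) (lam : ℝ) : Matrix (Fin p) (Fin p) ℝ :=
  Bᵀ * B + lam • (1 : Matrix (Fin p) (Fin p) ℝ)

variable (B : Matrix (Fin n) (Fin p) ℝ)

lemma Bt : Bᴴ = Bᵀ := conjTranspose_eq_transpose_of_trivial B

lemma C_psd : (Bᵀ * B).PosSemidef := by
  have := posSemidef_conjTranspose_mul_self B
  rwa [Bt] at this

lemma C_symm : (Bᵀ * B)ᵀ = Bᵀ * B := by rw [transpose_mul, transpose_transpose]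

lemma N_psd {lam : ℝ} (hlam : 0 ≤ lam) : (N B lam).PosSemidef :=
  (C_psd B).add (by simpa using psd_smul (Matrix.PosSemidef.one) hlam)

lemma N_symm (lam : ℝ) : (N B lam)ᵀ = N B lam := by
  rw [N, transpose_add, C_symm, transpose_smul, transpose_one]

lemma CN_comm (lam : ℝ) : (Bᵀ * B) * N B lam = N B lam * (Bᵀ * B) := by
  simp [N, Matrix.mul_add, Matrix.add_mul, Matrix.mul_smul, Matrix.smul_mul]

lemma NN_comm (lam ν : ℝ) : N B lam * N B ν = N B ν * N B lam := by
  simp only [N, Matrix.mul_add, Matrix.add_mul, Matrix.mul_smul, Matrix.smul_mul,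
    Matrix.mul_one, Matrix.one_mul, smul_smul, smul_add]
  rw [mul_comm lam ν]
  abel

lemma prod_psd {lam ν : ℝ} (hlam : 0 ≤ lam) (hν : 0 ≤ ν) :
    (N B ν * N B lam).PosSemidef := by
  have hexp : N B ν * N B lam =
      (Bᵀ * B) * (Bᵀ * B) + (ν • (Bᵀ * B) + (lam • (Bᵀ * B) + (lam * ν) • (1 : Matrix (Fin p) (Fin p) ℝ))) := by
    simp only [N, Matrix.mul_add, Matrix.add_mul, Matrix.mul_smul, Matrix.smul_mul,
      Matrix.mul_one, Matrix.one_mul, smul_smul, smul_add]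
    abel
  rw [hexp]
  have hCC : ((Bᵀ * B) * (Bᵀ * B)).PosSemidef := by
    have h1 := posSemidef_conjTranspose_mul_self (Bᵀ * B)
    rwa [conjTranspose_eq_transpose_of_trivial, C_symm] at h1
  exact hCC.add ((psd_smul (C_psd B) hν).add ((psd_smul (C_psd B) hlam).add
    (by simpa using psd_smul (Matrix.PosSemidef.one) (mul_nonneg hlam hν))))

lemma inv_diff {lam ν : ℝ} (hl : IsUnit (N B lam).det) (hv : IsUnit (N B ν).det) :
    (N B lam)⁻¹ - (N B ν)⁻¹ = (ν - lam) • (N B ν * N B lam)⁻¹ := by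
  have h2 : N B ν - N B lam = (ν - lam) • (1 : Matrix (Fin p) (Fin p) ℝ) := by
    simp only [N, sub_smul]
    abel
  have h1 : (N B lam)⁻¹ - (N B ν)⁻¹ = (N B lam)⁻¹ * (N B ν - N B lam) * (N B ν)⁻¹ := by
    rw [Matrix.mul_sub, Matrix.sub_mul, Matrix.mul_nonsing_inv_cancel_right _ _ hv,
      Matrix.mul_assoc, Matrix.nonsing_inv_mul_cancel_left _ _ hl]
  rw [h1, h2, Matrix.mul_smul, Matrix.smul_mul, Matrix.mul_one, Matrix.mul_inv_rev]

lemma smoother_symm {lam : ℝ} : (B * (N B lam)⁻¹ * Bᵀ).IsSymm := by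
  unfold Matrix.IsSymm
  rw [transpose_mul, transpose_mul, transpose_transpose, Matrix.transpose_nonsing_inv,
    N_symm, Matrix.mul_assoc]

lemma smoother_bounds {lam : ℝ} (hlam : 0 ≤ lam) (hdet : IsUnit (N B lam).det)
    (w : Fin n → ℝ) :
    0 ≤ w ⬝ᵥ (B * (N B lam)⁻¹ * Bᵀ).mulVec w ∧
      w ⬝ᵥ (B * (N B lam)⁻¹ * Bᵀ).mulVec w ≤ sqnorm w := by
  set u : Fin p → ℝ := (N B lam)⁻¹ *ᵥ (Bᵀ *ᵥ w) with hu
  set z : Fin n → ℝ := B *ᵥ u with hz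
  have hAw : (B * (N B lam)⁻¹ * Bᵀ) *ᵥ w = z := by
    rw [hz, hu, Matrix.mulVec_mulVec, Matrix.mulVec_mulVec]
  have hNu : (N B lam) *ᵥ u = Bᵀ *ᵥ w := by
    rw [hu, Matrix.mulVec_mulVec, Matrix.mul_nonsing_inv _ hdet, Matrix.one_mulVec]
  have hq1 : w ⬝ᵥ z = (Bᵀ *ᵥ w) ⬝ᵥ u := by
    rw [hz, Matrix.dotProduct_mulVec, Matrix.mulVec_transpose]
  have hCu : ((Bᵀ * B) *ᵥ u) ⬝ᵥ u = z ⬝ᵥ z := by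
    rw [← Matrix.mulVec_mulVec, ← hz, Matrix.mulVec_transpose, ← Matrix.dotProduct_mulVec, ← hz,
      dotProduct_comm]
  have key : w ⬝ᵥ z = z ⬝ᵥ z + lam * (u ⬝ᵥ u) := by
    rw [hq1, ← hNu, N, Matrix.add_mulVec, Matrix.smul_mulVec, Matrix.one_mulVec,
      add_dotProduct, smul_dotProduct, hCu, smul_eq_mul]
  have hzz : 0 ≤ z ⬝ᵥ z := by
    simp only [dotProduct]
    exact Finset.sum_nonneg fun i _ => mul_self_nonneg _
  have huu : 0 ≤ u ⬝ᵥ u := by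
    simp only [dotProduct]
    exact Finset.sum_nonneg fun i _ => mul_self_nonneg _
  have hq0 : 0 ≤ w ⬝ᵥ z := by
    rw [key]; positivity
  constructor
  · rw [hAw]; exact hq0
  · rw [hAw]
    have hCS : (w ⬝ᵥ z) ^ 2 ≤ sqnorm w * (z ⬝ᵥ z) := by
      have := Finset.sum_mul_sq_le_sq_mul_sq Finset.univ w z
      simp only [dotProduct, sqnorm]
      calc (∑ i, w i * z i) ^ 2 ≤ (∑ i, w i ^ 2) * ∑ i, z i ^ 2 := this
        _ = (∑ i, w i ^ 2) * ∑ i, z i * z i := by simp [sq]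
    have hzle : z ⬝ᵥ z ≤ w ⬝ᵥ z := by nlinarith [mul_nonneg hlam huu]
    have hs0 : 0 ≤ sqnorm w := Finset.sum_nonneg fun i _ => sq_nonneg _
    nlinarith

lemma smoother_comm {lam ν : ℝ} (hl : IsUnit (N B lam).det) (hv : IsUnit (N B ν).det) :
    (B * (N B lam)⁻¹ * Bᵀ) * (B * (N B ν)⁻¹ * Bᵀ)
      = (B * (N B ν)⁻¹ * Bᵀ) * (B * (N B lam)⁻¹ * Bᵀ) := by
  have M1 : (N B lam)⁻¹ * (Bᵀ * B) * (N B ν)⁻¹ = (N B ν)⁻¹ * (Bᵀ * B) * (N B lam)⁻¹ := by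
    calc (N B lam)⁻¹ * (Bᵀ * B) * (N B ν)⁻¹
        = (Bᵀ * B) * ((N B lam)⁻¹ * (N B ν)⁻¹) := by
          rw [comm_inv hl (CN_comm B lam), Matrix.mul_assoc]
      _ = (Bᵀ * B) * (N B ν * N B lam)⁻¹ := by rw [Matrix.mul_inv_rev]
      _ = (Bᵀ * B) * (N B lam * N B ν)⁻¹ := by rw [NN_comm]
      _ = (Bᵀ * B) * ((N B ν)⁻¹ * (N B lam)⁻¹) := by rw [Matrix.mul_inv_rev]
      _ = ((Bᵀ * B) * (N B ν)⁻¹) * (N B lam)⁻¹ := by simp only [Matrix.mul_assoc]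
      _ = (N B ν)⁻¹ * (Bᵀ * B) * (N B lam)⁻¹ := by rw [← comm_inv hv (CN_comm B ν)]
  calc (B * (N B lam)⁻¹ * Bᵀ) * (B * (N B ν)⁻¹ * Bᵀ)
      = B * ((N B lam)⁻¹ * (Bᵀ * B) * (N B ν)⁻¹) * Bᵀ := by
        simp only [Matrix.mul_assoc]
    _ = B * ((N B ν)⁻¹ * (Bᵀ * B) * (N B lam)⁻¹) * Bᵀ := by rw [M1]
    _ = (B * (N B ν)⁻¹ * Bᵀ) * (B * (N B lam)⁻¹ * Bᵀ) := by simp only [Matrix.mul_assoc]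

lemma smoother_mono {lam ν : ℝ} (hlam : 0 ≤ lam) (hl : IsUnit (N B lam).det)
    (hν : 0 ≤ ν) (hv : IsUnit (N B ν).det) (hle : lam ≤ ν) :
    ((B * (N B lam)⁻¹ * Bᵀ) - (B * (N B ν)⁻¹ * Bᵀ)).PosSemidef := by
  have hD : (B * (N B lam)⁻¹ * Bᵀ) - (B * (N B ν)⁻¹ * Bᵀ)
      = B * ((ν - lam) • (N B ν * N B lam)⁻¹) * Bᵀ := by
    rw [← inv_diff B hl hv, Matrix.mul_sub, Matrix.sub_mul]
  rw [hD]
  have hpsd : ((ν - lam) • (N B ν * N B lam)⁻¹).PosSemidef :=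
    psd_smul (prod_psd B hlam hν).inv (by linarith)
  have := hpsd.mul_mul_conjTranspose_same B
  rwa [Bt] at this

end TikAux

/-- Tikhonov regularizers sharing the same positive definite penalty matrix `K` form a
family of ordered linear smoothers: writing `B = X K^{−1/2}`, one has
`A_λ = B(BᵀB + λI)⁻¹Bᵀ`; each `A_λ` is symmetric with `0 ≤ wᵀA_λw ≤ ‖w‖²`; the `A_λ`
commute; and `λ ≤ ν` implies `A_ν ⪯ A_λ` in the Loewner order. -/
theorem tikhonov_family_is_ordered_smoothers
    (n p : ℕ) (hn : 1 ≤ n) (hp : 1 ≤ p)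
    (X : Matrix (Fin n) (Fin p) ℝ)
    (K : Matrix (Fin p) (Fin p) ℝ) (hKsymm : K.IsSymm) (hK : K.PosDef) :
    (∀ lam : ℝ, 0 ≤ lam → IsUnit (Xᵀ * X + lam • K).det →
      tikhonovSmoother X K lam =
        (X * (posSemidefSqrt hK.posSemidef)⁻¹) *
          ((X * (posSemidefSqrt hK.posSemidef)⁻¹)ᵀ * (X * (posSemidefSqrt hK.posSemidef)⁻¹)
              + lam • (1 : Matrix (Fin p) (Fin p) ℝ))⁻¹ *
          (X * (posSemidefSqrt hK.posSemidef)⁻¹)ᵀ)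
    ∧ (∀ lam : ℝ, 0 ≤ lam → IsUnit (Xᵀ * X + lam • K).det →
        (tikhonovSmoother X K lam).IsSymm ∧
        ∀ w : Fin n → ℝ, 0 ≤ w ⬝ᵥ (tikhonovSmoother X K lam).mulVec w ∧
          w ⬝ᵥ (tikhonovSmoother X K lam).mulVec w ≤ sqnorm w)
    ∧ (∀ lam ν : ℝ, 0 ≤ lam → IsUnit (Xᵀ * X + lam • K).det →
        0 ≤ ν → IsUnit (Xᵀ * X + ν • K).det →
        tikhonovSmoother X K lam * tikhonovSmoother X K ν
          = tikhonovSmoother X K ν * tikhonovSmoother X K lam)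
    ∧ (∀ lam ν : ℝ, 0 ≤ lam → IsUnit (Xᵀ * X + lam • K).det →
        0 ≤ ν → IsUnit (Xᵀ * X + ν • K).det → lam ≤ ν →
        (tikhonovSmoother X K lam - tikhonovSmoother X K ν).PosSemidef)
    ∧ (∀ (M : ℕ) (lams : Fin M → ℝ), (∀ j, 0 ≤ lams j) →
        (∀ j, IsUnit (Xᵀ * X + lams j • K).det) →
        IsOrderedSmootherFamily (Set.range fun j => tikhonovSmoother X K (lams j))) := by

  classical
  set S := posSemidefSqrt hK.posSemidef with hSdef
  have hSsymm : Sᵀ = S := by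
    rw [hSdef, posSemidefSqrt, transpose_mul, transpose_mul, diagonal_transpose,
      star_eq_conjTranspose, conjTranspose_eq_transpose_of_trivial, transpose_transpose,
      Matrix.mul_assoc]
  have hSS : S * S = K := by
    have hspec := hK.posSemidef.1.spectral_theorem
    rw [Unitary.conjStarAlgAut_apply] at hspec
    rw [hSdef, posSemidefSqrt]
    set U : Matrix (Fin p) (Fin p) ℝ := (hK.posSemidef.1.eigenvectorUnitary : Matrix (Fin p) (Fin p) ℝ) with hUdef
    set V : Matrix (Fin p) (Fin p) ℝ := (star hK.posSemidef.1.eigenvectorUnitary : Matrix (Fin p) (Fin p) ℝ) with hVdef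
    have hU : V * U = 1 := by
      rw [hVdef, hUdef, Unitary.coe_star_mul_self]
    rw [show U * diagonal ((↑) ∘ (√·) ∘ hK.posSemidef.1.eigenvalues) * V *
        (U * diagonal ((↑) ∘ (√·) ∘ hK.posSemidef.1.eigenvalues) * V) =
        U * (diagonal ((↑) ∘ (√·) ∘ hK.posSemidef.1.eigenvalues) * (V * U) *
          diagonal ((↑) ∘ (√·) ∘ hK.posSemidef.1.eigenvalues)) * V by
        simp only [Matrix.mul_assoc]]
    rw [hU, Matrix.mul_one, diagonal_mul_diagonal]
    conv_rhs => rw [hspec]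
    congr 3
    funext i
    simp [Real.mul_self_sqrt (hK.posSemidef.eigenvalues_nonneg i)]
  have hSdet : IsUnit S.det := by
    rw [isUnit_iff_ne_zero]
    intro h
    have hz : K.det = 0 := by rw [← hSS, det_mul, h, zero_mul]
    exact hK.det_pos.ne' hz
  set B := X * S⁻¹ with hBdef
  have hBT : Bᵀ = S⁻¹ * Xᵀ := by
    rw [hBdef, transpose_mul, Matrix.transpose_nonsing_inv, hSsymm]
  have hfact : ∀ lam : ℝ, Xᵀ * X + lam • K = S * TikAux.N B lam * S := by
    intro lam
    have h1 : S * (Bᵀ * B) * S = Xᵀ * X := by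
      rw [hBT, hBdef]
      calc S * (S⁻¹ * Xᵀ * (X * S⁻¹)) * S
          = S * (S⁻¹ * (Xᵀ * (X * (S⁻¹ * S)))) := by simp only [Matrix.mul_assoc]
        _ = Xᵀ * X := by
            rw [Matrix.nonsing_inv_mul _ hSdet, Matrix.mul_one,
              Matrix.mul_nonsing_inv_cancel_left _ _ hSdet]
    rw [TikAux.N, Matrix.mul_add, Matrix.add_mul, h1]
    congr 1
    rw [Matrix.mul_smul, Matrix.smul_mul, Matrix.mul_one, hSS]
  have hNdet : ∀ lam : ℝ, IsUnit (Xᵀ * X + lam • K).det → IsUnit (TikAux.N B lam).det := by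
    intro lam h
    rw [hfact lam, det_mul, det_mul] at h
    exact isUnit_of_mul_isUnit_right (isUnit_of_mul_isUnit_left h)
  have hrepr : ∀ lam : ℝ, IsUnit (Xᵀ * X + lam • K).det →
      tikhonovSmoother X K lam = B * (TikAux.N B lam)⁻¹ * Bᵀ := by
    intro lam h
    rw [tikhonovSmoother, hfact lam, Matrix.mul_inv_rev, Matrix.mul_inv_rev, hBT, hBdef]
    simp only [Matrix.mul_assoc]
  have part1 : ∀ lam : ℝ, 0 ≤ lam → IsUnit (Xᵀ * X + lam • K).det →
      tikhonovSmoother X K lam =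
        B * (Bᵀ * B + lam • (1 : Matrix (Fin p) (Fin p) ℝ))⁻¹ * Bᵀ := by
    intro lam _ hdet
    have h := hrepr lam hdet
    rw [TikAux.N] at h
    exact h
  have part2 : ∀ lam : ℝ, 0 ≤ lam → IsUnit (Xᵀ * X + lam • K).det →
      (tikhonovSmoother X K lam).IsSymm ∧
      ∀ w : Fin n → ℝ, 0 ≤ w ⬝ᵥ (tikhonovSmoother X K lam).mulVec w ∧
        w ⬝ᵥ (tikhonovSmoother X K lam).mulVec w ≤ sqnorm w := by
    intro lam hlam hdet
    rw [hrepr lam hdet]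
    exact ⟨TikAux.smoother_symm B, fun w => TikAux.smoother_bounds B hlam (hNdet lam hdet) w⟩
  have part3 : ∀ lam ν : ℝ, 0 ≤ lam → IsUnit (Xᵀ * X + lam • K).det →
      0 ≤ ν → IsUnit (Xᵀ * X + ν • K).det →
      tikhonovSmoother X K lam * tikhonovSmoother X K ν
        = tikhonovSmoother X K ν * tikhonovSmoother X K lam := by
    intro lam ν _ hdl _ hdv
    rw [hrepr lam hdl, hrepr ν hdv]
    exact TikAux.smoother_comm B (hNdet lam hdl) (hNdet ν hdv)
  have part4 : ∀ lam ν : ℝ, 0 ≤ lam → IsUnit (Xᵀ * X + lam • K).det →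
      0 ≤ ν → IsUnit (Xᵀ * X + ν • K).det → lam ≤ ν →
      (tikhonovSmoother X K lam - tikhonovSmoother X K ν).PosSemidef := by
    intro lam ν hl hdl hv hdv hle
    rw [hrepr lam hdl, hrepr ν hdv]
    exact TikAux.smoother_mono B hl (hNdet lam hdl) hv (hNdet ν hdv) hle
  refine ⟨part1, part2, part3, part4, ?_⟩
  intro M lams h0 hd
  refine ⟨?_, ?_, ?_⟩
  · rintro A ⟨j, rfl⟩
    exact part2 (lams j) (h0 j) (hd j)
  · rintro A ⟨i, rfl⟩ A' ⟨j, rfl⟩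
    exact part3 (lams i) (lams j) (h0 i) (hd i) (h0 j) (hd j)
  · rintro A ⟨i, rfl⟩ A' ⟨j, rfl⟩
    rcases le_total (lams i) (lams j) with h | h
    · exact Or.inr (part4 (lams i) (lams j) (h0 i) (hd i) (h0 j) (hd j) h)
    · exact Or.inl (part4 (lams j) (lams i) (h0 j) (hd j) (h0 i) (hd i) h)
end
end
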